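/- arXiv:1303.3924 — 5 statements merged into one kernel-verified Lean document; each statement's English description precedes it below -/
import Mathlib

section
/- In the category of right S-semimodules over a semiring S, every monomorphism is an injective map, and a morphism is surjective if and only if it is a regular epimorphism. -/
/-! Monomorphisms are injective: test them against the free module `S`, whose maps to `M`
are the maps `s ↦ s • x`. A surjection `f` is the coequalizer of its kernel pair
`{(a, b) | f a = f b}`. Conversely, if `f` is a coequalizer, the corestriction `M → range f`
also coequalizes the pair and so factors as `l ∘ f`; uniqueness of factorizations through `f`
forces `incl ∘ l = id`, so `range f` is all of `N`. -/

universe u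

/-- A witness that `f` is a regular epimorphism in the category of `S`-semimodules:
`f` is a coequalizer of a pair of morphisms `g, h`. -/
structure RegEpiWitness (S : Type u) [Semiring S] (M N : Type u)
    [AddCommMonoid M] [Module S M] [AddCommMonoid N] [Module S N]
    (f : M →ₗ[S] N) : Type (u + 1) where
  P : Type u
  [addP : AddCommMonoid P]
  [modP : Module S P]
  g : P →ₗ[S] M
  h : P →ₗ[S] M
  w : f.comp g = f.comp h
  isCoeq : ∀ (Q : Type u) [AddCommMonoid Q] [Module S Q] (k : M →ₗ[S] Q),
    k.comp g = k.comp h → ∃! l : N →ₗ[S] Q, l.comp f = k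

attribute [instance] RegEpiWitness.addP RegEpiWitness.modP

namespace LinearMap

variable {S : Type*} [Semiring S] {M N Q : Type*} [AddCommMonoid M] [Module S M]
  [AddCommMonoid N] [Module S N] [AddCommMonoid Q] [Module S Q]

noncomputable def descOfSurjective (f : M →ₗ[S] N) (hf : Function.Surjective f)
    (k : M →ₗ[S] Q) (hk : ∀ a b, f a = f b → k a = k b) : N →ₗ[S] Q where
  toFun n := k (Function.surjInv hf n)
  map_add' m n := by
    rw [← map_add k]
    apply hk
    simp only [map_add, Function.surjInv_eq hf]
  map_smul' s n := by
    rw [← map_smul k]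
    apply hk
    simp only [map_smul, Function.surjInv_eq hf, RingHom.id_apply]

theorem descOfSurjective_comp (f : M →ₗ[S] N) (hf : Function.Surjective f)
    (k : M →ₗ[S] Q) (hk : ∀ a b, f a = f b → k a = k b) :
    (descOfSurjective f hf k hk).comp f = k :=
  ext fun m => hk _ _ (Function.surjInv_eq hf (f m))

end LinearMap

section

variable {S : Type u} [Semiring S] {M N : Type u} [AddCommMonoid M] [Module S M]
  [AddCommMonoid N] [Module S N] {f : M →ₗ[S] N}

open LinearMap

theorem LinearMap.injective_of_left_cancel
    (hf : ∀ (P : Type u) [AddCommMonoid P] [Module S P] (g h : P →ₗ[S] M),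
      f.comp g = f.comp h → g = h) :
    Function.Injective f := fun x y hxy => by
  simpa using LinearMap.congr_fun (hf S (toSpanSingleton S M x) (toSpanSingleton S M y)
    (ext_ring (by simpa using hxy))) 1

noncomputable def regEpiWitnessOfSurjective (hf : Function.Surjective f) :
    RegEpiWitness S M N f where
  P := eqLocus (f ∘ₗ fst S M M) (f ∘ₗ snd S M M)
  g := fst S M M ∘ₗ Submodule.subtype _
  h := snd S M M ∘ₗ Submodule.subtype _
  w := ext fun p => p.2
  isCoeq _ _ _ k hk :=
    have hk' : ∀ a b, f a = f b → k a = k b := fun a b hab =>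
      LinearMap.congr_fun hk ⟨(a, b), hab⟩
    ⟨descOfSurjective f hf k hk', descOfSurjective_comp f hf k hk', fun _ hl =>
      (cancel_right hf).1 (hl.trans (descOfSurjective_comp f hf k hk').symm)⟩

theorem RegEpiWitness.surjective (w : RegEpiWitness S M N f) : Function.Surjective f := by
  obtain ⟨l, hl, -⟩ := w.isCoeq (range f) f.rangeRestrict
    (ext fun p => Subtype.ext (LinearMap.congr_fun w.w p))
  have hid : (range f).subtype ∘ₗ l = LinearMap.id :=
    (w.isCoeq N f w.w).unique
      (by rw [comp_assoc, hl, rangeRestrict, subtype_comp_codRestrict]) (id_comp f)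
  intro n
  rw [← LinearMap.id_apply (R := S) n, ← hid]
  exact mem_range.1 (l n).2

end

/-- In the category of `S`-semimodules over a semiring `S`, every monomorphism is
injective, and a morphism is surjective if and only if it is a regular epimorphism. -/
theorem mono_injective_and_surjective_iff_regular_epi
    {S : Type u} [Semiring S] {M N : Type u} [AddCommMonoid M] [Module S M]
    [AddCommMonoid N] [Module S N] (f : M →ₗ[S] N) :
    ((∀ (P : Type u) [AddCommMonoid P] [Module S P] (g h : P →ₗ[S] M),
        f.comp g = f.comp h → g = h) → Function.Injective f) ∧
    (Function.Surjective f ↔ Nonempty (RegEpiWitness S M N f)) :=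
  ⟨LinearMap.injective_of_left_cancel,
    fun hf => ⟨regEpiWitnessOfSurjective hf⟩, fun ⟨w⟩ => w.surjective⟩
end

section
/- An S-linear map f : M → N between right S-semimodules induces an isomorphism M/Ker(f) ≅ f(M) if and only if f is k-uniform. -/
/-!
The congruence `kerQuotCon f` is always contained in the kernel congruence `f m = f m'` of `f`,
and `k`-uniformity is exactly the reverse inclusion. When the two congruences agree, the first
isomorphism theorem for congruences gives the isomorphism; conversely, an isomorphism compatible
with the quotient maps forces `f m = f m'` to imply `m ≡ m'`.
-/

universe u

private lemma trans_aux {G : Type*} [AddCommMonoid G] {a b c u v u' v' : G}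
    (h1 : a + u = b + v) (h2 : b + u' = c + v') : a + (u + u') = c + (v' + v) := by
  calc a + (u + u') = (a + u) + u' := (add_assoc _ _ _).symm
    _ = (b + v) + u' := by rw [h1]
    _ = (b + u') + v := add_right_comm _ _ _
    _ = (c + v') + v := by rw [h2]
    _ = c + (v' + v) := add_assoc _ _ _

private lemma add_aux {G : Type*} [AddCommMonoid G] {w x y z u v u' v' : G}
    (h1 : w + u = x + v) (h2 : y + u' = z + v') :
    (w + y) + (u + u') = (x + z) + (v + v') := by
  rw [add_add_add_comm w y u u', h1, h2, add_add_add_comm]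

variable {S : Type u} [Semiring S] {M N : Type u}
  [AddCommMonoid M] [Module S M] [AddCommMonoid N] [Module S N]

/-- The congruence on `M` whose quotient is `M/Ker(f)`:
`m₁ ≡ m₂` iff `m₁ + k₁ = m₂ + k₂` for some `k₁, k₂ ∈ Ker(f)`. -/
def kerQuotCon (f : M →ₗ[S] N) : AddCon M where
  r a b := ∃ k₁ k₂, f k₁ = 0 ∧ f k₂ = 0 ∧ a + k₁ = b + k₂
  iseqv := by
    refine ⟨fun a => ⟨0, 0, map_zero f, map_zero f, rfl⟩, ?_, ?_⟩
    · rintro a b ⟨k₁, k₂, h₁, h₂, h⟩; exact ⟨k₂, k₁, h₂, h₁, h.symm⟩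
    · rintro a b c ⟨k₁, k₂, h₁, h₂, h⟩ ⟨l₁, l₂, h₁', h₂', h'⟩
      refine ⟨k₁ + l₁, l₂ + k₂, ?_, ?_, ?_⟩
      · rw [map_add, h₁, h₁', add_zero]
      · rw [map_add, h₂', h₂, add_zero]
      · exact trans_aux h h'
  add' := by
    rintro w x y z ⟨k₁, k₂, h₁, h₂, h⟩ ⟨l₁, l₂, h₁', h₂', h'⟩
    refine ⟨k₁ + l₁, k₂ + l₂, ?_, ?_, ?_⟩
    · rw [map_add, h₁, h₁', add_zero]
    · rw [map_add, h₂, h₂', add_zero]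
    · exact add_aux h h'

theorem map_eq_of_kerQuotCon {f : M →ₗ[S] N} {a b : M} (h : kerQuotCon f a b) : f a = f b := by
  obtain ⟨k₁, k₂, hk₁, hk₂, hab⟩ := h
  simpa only [map_add, hk₁, hk₂, add_zero] using congrArg f hab

theorem kerQuotCon_eq_ker_rangeRestrict {f : M →ₗ[S] N}
    (hf : ∀ m m', f m = f m' → kerQuotCon f m m') :
    kerQuotCon f = AddCon.ker f.rangeRestrict.toAddMonoidHom :=
  le_antisymm (fun _ _ h => Subtype.ext (map_eq_of_kerQuotCon h))
    fun m m' h => hf m m' (congrArg Subtype.val h)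

/-- An `S`-linear map `f : M → N` induces an isomorphism `M/Ker(f) ≅ f(M)`
if and only if `f` is `k`-uniform. -/
theorem quotient_ker_equiv_range_iff_kUniform (f : M →ₗ[S] N) :
    (∃ e : (kerQuotCon f).Quotient ≃+ LinearMap.range f,
        ∀ m : M, e ((kerQuotCon f).toQuotient m) = f.rangeRestrict m) ↔
      (∀ m m' : M, f m = f m' →
        ∃ k k', f k = 0 ∧ f k' = 0 ∧ m + k = m' + k') := by
  constructor
  · rintro ⟨e, he⟩ m m' hmm'
    refine (AddCon.eq _).mp (e.injective ?_)
    rw [he, he]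
    exact Subtype.ext hmm'
  · intro hf
    exact ⟨(AddCon.congr (AddEquiv.refl M) (kerQuotCon_eq_ker_rangeRestrict hf)).trans
      (AddCon.quotientKerEquivOfSurjective _ f.surjective_rangeRestrict), fun _ => rfl⟩
end

section
/- For every S-subsemimodule L ≤ M of a right S-semimodule M, the sequence 0 → L̄ → M → M/L → 0 is an exact sequence of S-semimodules, where L̄ = {m ∈ M : m + l₁ = l₂ for some l₁, l₂ ∈ L} is the subtractive closure of L. -/
universe u

/-- A sequence `X --f--> Y --g--> Z` of semimodules is exact iff
`f(X) = Ker(g)` and `g` is `k`-uniform. -/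
def IsExactSeq {X Y Z : Type*} [AddCommMonoid Y] [AddCommMonoid Z]
    (f : X → Y) (g : Y → Z) : Prop :=
  (∀ y : Y, (∃ x, f x = y) ↔ g y = 0) ∧
    ∀ y y' : Y, g y = g y' → ∃ k k', g k = 0 ∧ g k' = 0 ∧ y + k = y' + k'

variable {S : Type u} [Semiring S] {M : Type u} [AddCommMonoid M] [Module S M]

/-- The subtractive closure `L̄ = {m ∈ M : m + l₁ = l₂ for some l₁, l₂ ∈ L}`. -/
def subClosure (L : Submodule S M) : Submodule S M where
  carrier := {m | ∃ l₁ ∈ L, ∃ l₂ ∈ L, m + l₁ = l₂}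
  add_mem' := by
    rintro a b ⟨l₁, hl₁, l₂, hl₂, h⟩ ⟨l₁', hl₁', l₂', hl₂', h'⟩
    refine ⟨l₁ + l₁', L.add_mem hl₁ hl₁', l₂ + l₂', L.add_mem hl₂ hl₂', ?_⟩
    rw [add_add_add_comm, h, h']
  zero_mem' := ⟨0, L.zero_mem, 0, L.zero_mem, by rw [add_zero]⟩
  smul_mem' := by
    rintro s a ⟨l₁, hl₁, l₂, hl₂, h⟩
    exact ⟨s • l₁, L.smul_mem s hl₁, s • l₂, L.smul_mem s hl₂, by
      rw [← smul_add, h]⟩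

/-- The congruence `≡_L` on `M` whose quotient is `M/L`:
`m₁ ≡_L m₂` iff `m₁ + l₁ = m₂ + l₂` for some `l₁, l₂ ∈ L`. -/
def modCon (L : Submodule S M) : AddCon M where
  r a b := ∃ l₁ ∈ L, ∃ l₂ ∈ L, a + l₁ = b + l₂
  iseqv := by
    refine ⟨fun a => ⟨0, L.zero_mem, 0, L.zero_mem, rfl⟩, ?_, ?_⟩
    · rintro a b ⟨l₁, hl₁, l₂, hl₂, h⟩; exact ⟨l₂, hl₂, l₁, hl₁, h.symm⟩
    · rintro a b c ⟨l₁, hl₁, l₂, hl₂, h⟩ ⟨m₁, hm₁, m₂, hm₂, h'⟩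
      exact ⟨l₁ + m₁, L.add_mem hl₁ hm₁, m₂ + l₂, L.add_mem hm₂ hl₂,
        trans_aux h h'⟩
  add' := by
    rintro w x y z ⟨l₁, hl₁, l₂, hl₂, h⟩ ⟨m₁, hm₁, m₂, hm₂, h'⟩
    exact ⟨l₁ + m₁, L.add_mem hl₁ hm₁, l₂ + m₂, L.add_mem hl₂ hm₂,
      add_aux h h'⟩

theorem IsExactSeq.zero_left {X Y Z : Type*} [Nonempty X] [AddCommMonoid Y] [AddCommMonoid Z]
    {g : Y → Z} (hg : Function.Injective g) (hg0 : g 0 = 0) :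
    IsExactSeq (fun _ : X => (0 : Y)) g := by
  refine ⟨fun y => ⟨?_, fun hy => ⟨Classical.arbitrary X, hg (hg0.trans hy.symm)⟩⟩, ?_⟩
  · rintro ⟨-, rfl⟩
    exact hg0
  · intro y y' h
    exact ⟨0, 0, hg0, hg0, by rw [add_zero, add_zero, hg h]⟩

theorem IsExactSeq.to_subsingleton {Y Z W : Type*} [AddCommMonoid Y] [AddCommMonoid Z]
    [AddCommMonoid W] [Subsingleton W] {f : Y → Z} (hf : Function.Surjective f) (g : Z → W) :
    IsExactSeq f g :=
  ⟨fun z => iff_of_true (hf z) (Subsingleton.elim _ _),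
    fun z z' _ => ⟨z', z, Subsingleton.elim _ _, Subsingleton.elim _ _, add_comm z z'⟩⟩

theorem le_subClosure (L : Submodule S M) : L ≤ subClosure L :=
  fun l hl => ⟨0, L.zero_mem, l, hl, add_zero l⟩

theorem modCon_toQuotient_eq_zero_iff {L : Submodule S M} {m : M} :
    (modCon L).toQuotient m = 0 ↔ m ∈ subClosure L := by
  rw [← AddCon.coe_zero, AddCon.eq]
  change (∃ l₁ ∈ L, ∃ l₂ ∈ L, m + l₁ = 0 + l₂) ↔ ∃ l₁ ∈ L, ∃ l₂ ∈ L, m + l₁ = l₂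
  simp only [zero_add]

theorem isExactSeq_subClosure_toQuotient (L : Submodule S M) :
    IsExactSeq (fun x : subClosure L => (x : M)) (fun m : M => (modCon L).toQuotient m) := by
  refine ⟨fun m => ?_, fun y y' h => ?_⟩
  · rw [modCon_toQuotient_eq_zero_iff]
    exact ⟨fun ⟨x, hx⟩ => hx ▸ x.2, fun hm => ⟨⟨m, hm⟩, rfl⟩⟩
  · obtain ⟨l₁, hl₁, l₂, hl₂, h⟩ := (AddCon.eq _).mp h
    exact ⟨l₁, l₂, modCon_toQuotient_eq_zero_iff.mpr (le_subClosure L hl₁),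
      modCon_toQuotient_eq_zero_iff.mpr (le_subClosure L hl₂), h⟩

/-- For every subsemimodule `L ≤ M`, the sequence `0 → L̄ → M → M/L → 0` is exact. -/
theorem subtractive_closure_short_exact (L : Submodule S M) :
    IsExactSeq (fun _ : PUnit.{u + 1} => (0 : subClosure L))
      (fun x : subClosure L => (x : M)) ∧
    IsExactSeq (fun x : subClosure L => (x : M))
      (fun m : M => (modCon L).toQuotient m) ∧
    IsExactSeq (fun m : M => (modCon L).toQuotient m)
      (fun _ : (modCon L).Quotient => PUnit.unit.{u + 1}) :=
  ⟨IsExactSeq.zero_left Subtype.coe_injective rfl, isExactSeq_subClosure_toQuotient L,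
    IsExactSeq.to_subsingleton AddCon.mk'_surjective _⟩
end

section
/- A right S-semimodule P is projective if and only if P has a dual basis: there exists a family {(p_λ, f_λ)}_{λ∈Λ} in P × P* such that for each p ∈ P the set {λ : f_λ(p) ≠ 0} is finite and p = Σ_λ p_λ f_λ(p). -/
/-!
A dual basis `(p_λ, f_λ)` is the same thing as a linear section `x ↦ (f_λ x)_λ` of the
surjection `Λ →₀ S → P`, `e_λ ↦ p_λ`: the finiteness condition says exactly that the
coordinates land in the free module, and the reconstruction formula says that the composite
is the identity. So having a dual basis means being a direct summand of a free module, which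
is how `Module.Projective` is defined, and that in turn is equivalent to the lifting property.
-/

universe u

open Finsupp

theorem Finsupp.linearCombination_eq_finsum {S Λ P : Type*} [Semiring S] [AddCommMonoid P]
    [Module S P] (p : Λ → P) (v : Λ →₀ S) :
    linearCombination S p v = ∑ᶠ l, v l • p l := by
  rw [linearCombination_apply, Finsupp.sum, finsum_eq_sum_of_support_subset]
  simpa using Function.support_smul_subset_left (⇑v) p

namespace LinearMap

variable {S Λ P M : Type*} [Semiring S] [AddCommMonoid P] [Module S P] [AddCommMonoid M]
  [Module S M]

noncomputable def ofSupportFinite (f : Λ → P →ₗ[S] M)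
    (hf : ∀ x, (Function.support fun l => f l x).Finite) : P →ₗ[S] Λ →₀ M where
  toFun x := Finsupp.ofSupportFinite (fun l => f l x) (hf x)
  map_add' x y := by ext; simp [Finsupp.ofSupportFinite_coe]
  map_smul' c x := by ext; simp [Finsupp.ofSupportFinite_coe]

@[simp]
theorem ofSupportFinite_apply (f : Λ → P →ₗ[S] M)
    (hf : ∀ x, (Function.support fun l => f l x).Finite) (x : P) (l : Λ) :
    ofSupportFinite f hf x l = f l x :=
  rfl

end LinearMap

namespace Module

variable {S : Type*} [Semiring S] {P : Type*} [AddCommMonoid P] [Module S P]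

theorem exists_dualBasis_iff_exists_section {Λ : Type*} (p : Λ → P) :
    (∃ f : Λ → (P →ₗ[S] S),
        ∀ x : P, (Function.support fun l => f l x).Finite ∧ ∑ᶠ l, (f l x) • p l = x) ↔
      ∃ s : P →ₗ[S] Λ →₀ S, linearCombination S p ∘ₗ s = .id := by
  constructor
  · rintro ⟨f, hf⟩
    refine ⟨LinearMap.ofSupportFinite f fun x => (hf x).1, LinearMap.ext fun x => ?_⟩
    simpa [linearCombination_eq_finsum] using (hf x).2
  · rintro ⟨s, hs⟩
    refine ⟨fun l => lapply l ∘ₗ s, fun x => ⟨(s x).hasFiniteSupport, ?_⟩⟩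
    simpa [linearCombination_eq_finsum] using LinearMap.congr_fun hs x

theorem projective_iff_exists_section {S P : Type u} [Semiring S] [AddCommMonoid P]
    [Module S P] :
    Projective S P ↔
      ∃ (Λ : Type u) (p : Λ → P) (s : P →ₗ[S] Λ →₀ S),
        linearCombination S p ∘ₗ s = .id :=
  ⟨fun h => ⟨P, id, projective_def'.1 h⟩,
    fun ⟨_, p, s, hs⟩ => .of_split s (linearCombination S p) hs⟩

theorem projective_iff_forall_surjective_lift {S P : Type u} [Semiring S] [AddCommMonoid P]
    [Module S P] :
    Projective S P ↔
      ∀ (Y Z : Type u) [AddCommMonoid Y] [Module S Y] [AddCommMonoid Z] [Module S Z]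
        (g : Y →ₗ[S] Z), Function.Surjective g →
        ∀ h : P →ₗ[S] Z, ∃ h' : P →ₗ[S] Y, g.comp h' = h :=
  ⟨fun _ _ _ _ _ _ _ g hg h => projective_lifting_property g h hg,
    fun H => .of_lifting_property'' fun g hg => H _ _ g hg .id⟩

end Module

/-- A right `S`-semimodule `P` is projective if and only if `P` has a dual basis:
a family `{(p_λ, f_λ)}` in `P × P*` such that for each `p ∈ P` the set
`{λ : f_λ(p) ≠ 0}` is finite and `p = Σ_λ p_λ f_λ(p)`. -/
theorem projective_iff_dual_basis
    {S : Type u} [Semiring S] {P : Type u} [AddCommMonoid P] [Module S P] :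
    (∀ (Y Z : Type u) [AddCommMonoid Y] [Module S Y] [AddCommMonoid Z]
        [Module S Z] (g : Y →ₗ[S] Z), Function.Surjective g →
        ∀ h : P →ₗ[S] Z, ∃ h' : P →ₗ[S] Y, g.comp h' = h) ↔
      ∃ (Λ : Type u) (p : Λ → P) (f : Λ → (P →ₗ[S] S)),
        ∀ x : P, (Function.support fun l => f l x).Finite ∧
          ∑ᶠ l, (f l x) • p l = x := by
  rw [← Module.projective_iff_forall_surjective_lift, Module.projective_iff_exists_section]
  exact exists_congr fun _ => exists_congr fun p =>
    (Module.exists_dualBasis_iff_exists_section p).symm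
end

section
/- If a right S-semimodule P is uniformly generated and uniformly projective, then P is projective. -/
/-! Lifting the identity of `P` along a uniform surjection `π : S^(Λ) → P` exhibits `P` as a
retract of a free module, so `P` is projective. -/

universe u

def KUniform {Y Z : Type*} [AddCommMonoid Y] [AddCommMonoid Z] (g : Y → Z) : Prop :=
  ∀ y y' : Y, g y = g y' → ∃ k k', g k = 0 ∧ g k' = 0 ∧ y + k = y' + k'

/-- If a right `S`-semimodule `P` is uniformly generated and uniformly projective,
then `P` is projective. -/
theorem uniformly_generated_uniformly_projective_implies_projective
    {S : Type u} [Semiring S] {P : Type u} [AddCommMonoid P] [Module S P]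
    (hgen : ∃ (Λ : Type u) (π : (Λ →₀ S) →ₗ[S] P),
      Function.Surjective π ∧ KUniform ⇑π)
    (hproj : ∀ (Y Z : Type u) [AddCommMonoid Y] [Module S Y] [AddCommMonoid Z]
      [Module S Z] (g : Y →ₗ[S] Z), Function.Surjective g → KUniform ⇑g →
      ∀ h : P →ₗ[S] Z, ∃ h' : P →ₗ[S] Y, g.comp h' = h) :
    ∀ (Y Z : Type u) [AddCommMonoid Y] [Module S Y] [AddCommMonoid Z]
      [Module S Z] (g : Y →ₗ[S] Z), Function.Surjective g →
      ∀ h : P →ₗ[S] Z, ∃ h' : P →ₗ[S] Y, g.comp h' = h := by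
  obtain ⟨Λ, π, hπ_surj, hπ_unif⟩ := hgen
  obtain ⟨σ, hσ⟩ := hproj _ _ π hπ_surj hπ_unif .id
  have : Module.Projective S P := .of_split σ π hσ
  intro Y Z _ _ _ _ g hg h
  exact Module.projective_lifting_property g h hg
end
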